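/- arXiv:2511.11278 — 2 statements merged into one kernel-verified Lean document; each statement's English description precedes it below -/
import Mathlib

section
/- For every finite set N with |N| ≥ 2 and every derangement μ⁰ of N, the CE-TTC mechanism satisfies complete exchange (its output is always a derangement), strategy-proofness, and CE-efficiency. -/
open scoped Classical

/-- Each division has a strict linear (total) preference order over workers. -/
def StrictProfile {α : Type*} (pref : α → α → α → Prop) : Prop :=
  ∀ i, IsStrictTotalOrder α (pref i)

/-- `pref'` is an improvement for division `i` with respect to `pref`. -/
def Improvement {α : Type*} (pref pref' : α → α → α → Prop) (i : α) : Prop :=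
  pref' i = pref i ∧
  (∀ j, j ≠ i → ∀ k, k ≠ i → pref j i k → pref' j i k) ∧
  (∀ j, j ≠ i → ∀ k, k ≠ i → ∀ l, l ≠ i → (pref j k l ↔ pref' j k l))

/-- The `r`-maximum element of the finite set `s` (chosen via Hilbert choice):
the element of `s` that `r`-beats every other element of `s`. -/
noncomputable def pick {α : Type*} [Nonempty α] (r : α → α → Prop) (s : Finset α) : α :=
  Classical.epsilon fun m => m ∈ s ∧ ∀ x ∈ s, x ≠ m → r m x

/-- `μ` is CE-efficient at `pref`: no derangement (complete-exchange assignment)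
`μ'` weakly improves every division and strictly improves some division. -/
def CEEfficientAt {α : Type*} (pref : α → α → α → Prop) (μ : α → α) : Prop :=
  ¬ ∃ μ' : α → α, Function.Bijective μ' ∧ (∀ i, μ' i ≠ i) ∧
      (∀ i, μ' i = μ i ∨ pref i (μ' i) (μ i)) ∧ (∃ j, pref j (μ' j) (μ j))

/-- One round of the CE-TTC mechanism.  `R` is the set of remaining divisions; the
remaining workers are the temporary endowments `μ0 j`, `j ∈ R`.  Each remaining
division `i` points to its most preferred remaining worker other than its original
worker `i`; each remaining worker points to the division whose temporary endowment
it is, so the successor of `i` is `μ0⁻¹` of the worker `i` points to.  Every cycle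
is executed: each division in a cycle receives the worker it points to, and the
divisions of all cycles are removed. -/
noncomputable def cettcStep {α : Type*} [Fintype α] [DecidableEq α] [Nonempty α]
    (μ0 : Equiv.Perm α) (pref : α → α → α → Prop) :
    ℕ → Finset α → (α → α) → (α → α)
  | 0, _, μ => μ
  | fuel + 1, R, μ =>
    let point : α → α := fun i => pick (pref i) ((R.image μ0).erase i)
    let σ : α → α := fun i => μ0.symm (point i)
    let C : Finset α := R.filter fun i => ∃ m, 0 < m ∧ m ≤ R.card ∧ σ^[m] i = i
    cettcStep μ0 pref fuel (R \ C) (fun i => if i ∈ C then point i else μ i)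

/-- The CE-TTC mechanism: top trading cycles run from the exogenous derangement
`μ0` of temporary endowments, with each division forbidden from ever pointing to
its own original worker. -/
noncomputable def cettc {α : Type*} [Fintype α] [DecidableEq α] [Nonempty α]
    (μ0 : Equiv.Perm α) (pref : α → α → α → Prop) : α → α :=
  cettcStep μ0 pref (Fintype.card α) Finset.univ (fun a => a)

set_option linter.unusedSectionVars false
section pick
variable {α : Type*} [Nonempty α] {r : α → α → Prop}

theorem exists_max (hr : IsStrictTotalOrder α r) :
    ∀ s : Finset α, s.Nonempty → ∃ m, m ∈ s ∧ ∀ x ∈ s, x ≠ m → r m x := by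
  intro s
  induction s using Finset.induction_on with
  | empty => intro h; exact absurd h (by simp)
  | @insert a s ha ih =>
    intro _
    rcases s.eq_empty_or_nonempty with rfl | hs
    · exact ⟨a, by simp⟩
    · obtain ⟨m, hm, hmax⟩ := ih hs
      rcases (show r a m ∨ a = m ∨ r m a from if h1 : r a m then Or.inl h1 else if h2 : r m a then Or.inr (Or.inr h2) else Or.inr (Or.inl (hr.trichotomous a m h1 h2))) with h | h | h
      · refine ⟨a, Finset.mem_insert_self _ _, ?_⟩
        intro x hx hxa
        rcases Finset.mem_insert.mp hx with rfl | hx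
        · exact absurd rfl hxa
        · by_cases hxm : x = m
          · subst hxm; exact h
          · exact hr.trans _ _ _ h (hmax x hx hxm)
      · refine ⟨m, Finset.mem_insert_of_mem hm, ?_⟩
        intro x hx hxm
        rcases Finset.mem_insert.mp hx with rfl | hx
        · exact absurd h hxm
        · exact hmax x hx hxm
      · refine ⟨m, Finset.mem_insert_of_mem hm, ?_⟩
        intro x hx hxm
        rcases Finset.mem_insert.mp hx with rfl | hx
        · exact h
        · exact hmax x hx hxm

theorem pick_spec (hr : IsStrictTotalOrder α r) {s : Finset α} (hs : s.Nonempty) :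
    pick r s ∈ s ∧ ∀ x ∈ s, x ≠ pick r s → r (pick r s) x :=
  Classical.epsilon_spec (exists_max hr s hs)

theorem pick_mem (hr : IsStrictTotalOrder α r) {s : Finset α} (hs : s.Nonempty) :
    pick r s ∈ s := (pick_spec hr hs).1

theorem pick_max (hr : IsStrictTotalOrder α r) {s : Finset α} (hs : s.Nonempty)
    {x : α} (hx : x ∈ s) (hne : x ≠ pick r s) : r (pick r s) x :=
  (pick_spec hr hs).2 x hx hne

/-- weak maximality -/
theorem pick_wmax (hr : IsStrictTotalOrder α r) {s : Finset α} (hs : s.Nonempty)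
    {x : α} (hx : x ∈ s) : pick r s = x ∨ r (pick r s) x := by
  by_cases h : x = pick r s
  · exact Or.inl h.symm
  · exact Or.inr (pick_max hr hs hx h)

theorem pick_subset (hr : IsStrictTotalOrder α r) {s t : Finset α} (hts : t ⊆ s)
    (hmem : pick r s ∈ t) : pick r t = pick r s := by
  have ht : t.Nonempty := ⟨_, hmem⟩
  by_contra hne
  have h1 : r (pick r t) (pick r s) := pick_max hr ht hmem (Ne.symm hne)
  have h2 : r (pick r s) (pick r t) :=
    pick_max hr ⟨_, hts hmem⟩ (hts (pick_mem hr ht)) hne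
  exact hr.irrefl _ (hr.trans _ _ _ h1 h2)
end pick


section CETTC
variable {α : Type*} [Fintype α] [DecidableEq α] [Nonempty α]
variable {μ0 : Equiv.Perm α}

/-- worker pointed to by division `i` when remaining set is `R`. -/
noncomputable def cePoint (μ0 : Equiv.Perm α) (pref : α → α → α → Prop) (R : Finset α) (i : α) : α :=
  pick (pref i) ((R.image μ0).erase i)

/-- successor division of `i`. -/
noncomputable def ceSig (μ0 : Equiv.Perm α) (pref : α → α → α → Prop) (R : Finset α) (i : α) : α :=
  μ0.symm (cePoint μ0 pref R i)

/-- divisions lying on cycles. -/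
noncomputable def ceCyc (μ0 : Equiv.Perm α) (pref : α → α → α → Prop) (R : Finset α) : Finset α :=
  R.filter fun i => ∃ m, 0 < m ∧ m ≤ R.card ∧ (ceSig μ0 pref R)^[m] i = i

theorem cettcStep_succ (pref : α → α → α → Prop) (fuel : ℕ) (R : Finset α) (μ : α → α) :
    cettcStep μ0 pref (fuel + 1) R μ =
      cettcStep μ0 pref fuel (R \ ceCyc μ0 pref R)
        (fun i => if i ∈ ceCyc μ0 pref R then cePoint μ0 pref R i else μ i) := rfl

variable {pref : α → α → α → Prop} {R : Finset α}
variable (hμ0 : ∀ i, μ0 i ≠ i) (hpref : StrictProfile pref)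
include hμ0 hpref


omit hpref in
theorem ceAvail_nonempty {i : α} (hi : i ∈ R) : ((R.image μ0).erase i).Nonempty :=
  ⟨μ0 i, Finset.mem_erase.mpr ⟨hμ0 i, Finset.mem_image_of_mem _ hi⟩⟩

theorem cePoint_mem {i : α} (hi : i ∈ R) : cePoint μ0 pref R i ∈ (R.image μ0).erase i :=
  pick_mem (hpref i) (ceAvail_nonempty hμ0 hi)

theorem ceSig_mem {i : α} (hi : i ∈ R) : ceSig μ0 pref R i ∈ R := by
  have h := cePoint_mem hμ0 hpref hi (R := R)
  rw [Finset.mem_erase, Finset.mem_image] at h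
  obtain ⟨-, j, hj, hji⟩ := h
  have : ceSig μ0 pref R i = j := by
    rw [ceSig, ← hji, Equiv.symm_apply_apply]
  rw [this]; exact hj

theorem ceSig_iter_mem {i : α} (hi : i ∈ R) (k : ℕ) : (ceSig μ0 pref R)^[k] i ∈ R := by
  induction k with
  | zero => simpa using hi
  | succ k ih => rw [Function.iterate_succ_apply']; exact ceSig_mem hμ0 hpref ih

omit hμ0 hpref in
theorem iter_swap (f : α → α) (a b : ℕ) (x : α) : f^[a] (f^[b] x) = f^[b] (f^[a] x) := by
  rw [← Function.iterate_add_apply, ← Function.iterate_add_apply, Nat.add_comm]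

omit hμ0 hpref in
theorem ceCyc_subset : ceCyc μ0 pref R ⊆ R := Finset.filter_subset _ _

theorem ceCyc_nonempty (hR : R.Nonempty) : (ceCyc μ0 pref R).Nonempty := by
  obtain ⟨i, hi⟩ := hR
  set S := ceSig μ0 pref R with hS
  have hmaps : ∀ k ∈ Finset.range (R.card + 1), S^[k] i ∈ R := fun k _ =>
    ceSig_iter_mem hμ0 hpref hi k
  obtain ⟨k, hk, l, hl, hkl, heq⟩ :=
    Finset.exists_ne_map_eq_of_card_lt_of_maps_to (by simp) hmaps
  rcases Nat.lt_or_ge k l with h | h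
  · refine ⟨S^[k] i, Finset.mem_filter.mpr ⟨ceSig_iter_mem hμ0 hpref hi k, l - k, ?_, ?_, ?_⟩⟩
    · omega
    · have := Finset.mem_range.mp hl; omega
    · rw [← Function.iterate_add_apply]
      have : l - k + k = l := by omega
      rw [this, ← heq]
  · have hlk : l < k := by omega
    refine ⟨S^[l] i, Finset.mem_filter.mpr ⟨ceSig_iter_mem hμ0 hpref hi l, k - l, ?_, ?_, ?_⟩⟩
    · omega
    · have := Finset.mem_range.mp hk; omega
    · rw [← Function.iterate_add_apply]
      have : k - l + l = k := by omega
      rw [this, heq]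

theorem ceCyc_card_lt (hR : R.Nonempty) : (R \ ceCyc μ0 pref R).card < R.card :=
  Finset.card_lt_card (Finset.sdiff_ssubset ceCyc_subset (ceCyc_nonempty hμ0 hpref hR))

theorem ceSig_maps_cyc {i : α} (hi : i ∈ ceCyc μ0 pref R) :
    ceSig μ0 pref R i ∈ ceCyc μ0 pref R := by
  obtain ⟨hiR, m, hm0, hmR, hfix⟩ := Finset.mem_filter.mp hi
  refine Finset.mem_filter.mpr ⟨ceSig_mem hμ0 hpref hiR, m, hm0, hmR, ?_⟩
  rw [← Function.iterate_succ_apply, Function.iterate_succ_apply', hfix]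

theorem ceSig_inj_cyc {i j : α} (hi : i ∈ ceCyc μ0 pref R) (hj : j ∈ ceCyc μ0 pref R)
    (h : ceSig μ0 pref R i = ceSig μ0 pref R j) : i = j := by
  set S := ceSig μ0 pref R with hS
  obtain ⟨-, m, hm0, -, hfi⟩ := Finset.mem_filter.mp hi
  obtain ⟨-, n, hn0, -, hfj⟩ := Finset.mem_filter.mp hj
  have hfim : S^[m * n] i = i := by
    rw [Function.iterate_mul]; exact Function.iterate_fixed hfi n
  have hfjm : S^[m * n] j = j := by
    rw [Nat.mul_comm, Function.iterate_mul]; exact Function.iterate_fixed hfj m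
  have hmn : 0 < m * n := Nat.mul_pos hm0 hn0
  calc i = S^[m * n] i := hfim.symm
    _ = S^[m * n - 1] (S i) := by
        rw [← Function.iterate_succ_apply]
        congr 1; omega
    _ = S^[m * n - 1] (S j) := by rw [h]
    _ = S^[m * n] j := by
        rw [← Function.iterate_succ_apply]
        congr 1; omega
    _ = j := hfjm

theorem ceCyc_image : (ceCyc μ0 pref R).image (ceSig μ0 pref R) = ceCyc μ0 pref R := by
  apply Finset.eq_of_subset_of_card_le
  · intro x hx
    obtain ⟨i, hi, rfl⟩ := Finset.mem_image.mp hx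
    exact ceSig_maps_cyc hμ0 hpref hi
  · rw [Finset.card_image_of_injOn fun a ha b hb hab => ceSig_inj_cyc hμ0 hpref ha hb hab]

theorem cettcStep_off (fuel : ℕ) : ∀ (R : Finset α) (μ : α → α) (i : α), i ∉ R →
    cettcStep μ0 pref fuel R μ i = μ i := by
  induction fuel with
  | zero => intro R μ i _; rfl
  | succ fuel ih =>
    intro R μ i hi
    rw [cettcStep_succ]
    have hiC : i ∉ ceCyc μ0 pref R := fun h => hi (ceCyc_subset h)
    rw [ih _ _ _ (by simp [hi])]
    simp [hiC]

theorem cettcStep_on_cyc (fuel : ℕ) (R : Finset α) (μ : α → α) {i : α}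
    (hi : i ∈ ceCyc μ0 pref R) :
    cettcStep μ0 pref (fuel + 1) R μ i = cePoint μ0 pref R i := by
  rw [cettcStep_succ, cettcStep_off hμ0 hpref fuel _ _ i (by simp [ceCyc_subset hi, hi])]
  simp [hi]

theorem cettcStep_mem (fuel : ℕ) : ∀ (R : Finset α) (μ : α → α) (i : α), i ∈ R →
    R.card ≤ fuel → cettcStep μ0 pref fuel R μ i ∈ (R.image μ0).erase i := by
  induction fuel with
  | zero =>
    intro R μ i hi hc
    exact absurd hi (by rw [Finset.card_eq_zero.mp (Nat.le_zero.mp hc)]; simp)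
  | succ fuel ih =>
    intro R μ i hi hc
    by_cases hiC : i ∈ ceCyc μ0 pref R
    · rw [cettcStep_on_cyc hμ0 hpref _ _ _ hiC]; exact cePoint_mem hμ0 hpref hi
    · rw [cettcStep_succ]
      have hiR' : i ∈ R \ ceCyc μ0 pref R := Finset.mem_sdiff.mpr ⟨hi, hiC⟩
      have hc' : (R \ ceCyc μ0 pref R).card ≤ fuel := by
        have := ceCyc_card_lt hμ0 hpref ⟨i, hi⟩ (R := R); omega
      have := ih (R \ ceCyc μ0 pref R)
        (fun j => if j ∈ ceCyc μ0 pref R then cePoint μ0 pref R j else μ j) i hiR' hc'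
      exact Finset.erase_subset_erase _
        (Finset.image_subset_image (Finset.sdiff_subset)) this

theorem cettcStep_bij (fuel : ℕ) : ∀ (R : Finset α) (μ : α → α), R.card ≤ fuel →
    (∀ a ∈ R, ∀ b ∈ R, cettcStep μ0 pref fuel R μ a = cettcStep μ0 pref fuel R μ b → a = b) ∧
    R.image (cettcStep μ0 pref fuel R μ) = R.image μ0 := by
  induction fuel with
  | zero =>
    intro R μ hc
    have : R = ∅ := Finset.card_eq_zero.mp (Nat.le_zero.mp hc)
    subst this; simp
  | succ fuel ih =>
    intro R μ hc
    rcases R.eq_empty_or_nonempty with rfl | hR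
    · simp
    set C := ceCyc μ0 pref R with hC
    set μ'' : α → α := fun j => if j ∈ C then cePoint μ0 pref R j else μ j with hμ''
    set μf := cettcStep μ0 pref (fuel + 1) R μ with hμf
    have hstep : μf = cettcStep μ0 pref fuel (R \ C) μ'' := cettcStep_succ pref fuel R μ
    have hc' : (R \ C).card ≤ fuel := by
      have h := ceCyc_card_lt hμ0 hpref hR (R := R); rw [← hC] at h; omega
    obtain ⟨inj', img'⟩ := ih (R \ C) μ'' hc'
    have honC : ∀ i ∈ C, μf i = μ0 (ceSig μ0 pref R i) := by
      intro i hi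
      rw [hμf, cettcStep_on_cyc hμ0 hpref _ _ _ hi, ceSig, Equiv.apply_symm_apply]
    have himgC : C.image μf = C.image μ0 := by
      have h1 : C.image μf = C.image (fun i => μ0 (ceSig μ0 pref R i)) :=
        Finset.image_congr (fun i hi => honC i hi)
      have h2 : C.image (fun i => μ0 (ceSig μ0 pref R i)) =
          (C.image (ceSig μ0 pref R)).image μ0 := by rw [Finset.image_image]; rfl
      rw [h1, h2, ceCyc_image hμ0 hpref]
    have himgR' : (R \ C).image μf = (R \ C).image μ0 := by rw [hstep]; exact img'
    have hunion : C ∪ (R \ C) = R := Finset.union_sdiff_of_subset ceCyc_subset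
    have himg : R.image μf = R.image μ0 := by
      rw [← hunion, Finset.image_union, Finset.image_union, himgC, himgR']
    refine ⟨?_, himg⟩
    intro a ha b hb hab
    have hmem : ∀ x ∈ R, x ∈ C ∨ x ∈ R \ C := by
      intro x hx
      by_cases h : x ∈ C
      · exact Or.inl h
      · exact Or.inr (Finset.mem_sdiff.mpr ⟨hx, h⟩)
    have key : ∀ x ∈ C, ∀ y ∈ R \ C, μf x ≠ μf y := by
      intro x hx y hy hxy
      have h1 : μf y ∈ (R \ C).image μ0 := by
        rw [← himgR']; exact Finset.mem_image_of_mem _ hy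
      obtain ⟨c, hcm, hce⟩ := Finset.mem_image.mp h1
      have : c = ceSig μ0 pref R x := μ0.injective (by rw [hce, ← hxy, honC x hx])
      have hcC : c ∈ C := this ▸ ceSig_maps_cyc hμ0 hpref hx
      exact (Finset.mem_sdiff.mp hcm).2 hcC
    rcases hmem a ha with haC | haR'
    · rcases hmem b hb with hbC | hbR'
      · have hSab : μ0 (ceSig μ0 pref R a) = μ0 (ceSig μ0 pref R b) := by
          rw [← honC a haC, ← honC b hbC]; exact hab
        exact ceSig_inj_cyc hμ0 hpref haC hbC (μ0.injective hSab)
      · exact absurd hab (key a haC b hbR')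
    · rcases hmem b hb with hbC | hbR'
      · exact absurd hab.symm (key b hbC a haR')
      · exact inj' a haR' b hbR' (by rw [← hstep]; exact hab)

theorem cettcStep_eff (fuel : ℕ) : ∀ (R : Finset α) (μ μ' : α → α), R.card ≤ fuel →
    Function.Injective μ' → (∀ x, μ' x ≠ x) →
    (∀ x ∈ R, μ' x ∈ R.image μ0) →
    (∀ x ∈ R, μ' x = cettcStep μ0 pref fuel R μ x ∨
      pref x (μ' x) (cettcStep μ0 pref fuel R μ x)) →
    ∀ x ∈ R, μ' x = cettcStep μ0 pref fuel R μ x := by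
  induction fuel with
  | zero =>
    intro R μ μ' hc _ _ _ _ x hx
    rw [Finset.card_eq_zero.mp (Nat.le_zero.mp hc)] at hx
    simp at hx
  | succ fuel ih =>
    intro R μ μ' hc hinj hder hmem hdom
    rcases R.eq_empty_or_nonempty with rfl | hR
    · intro x hx; simp at hx
    set C := ceCyc μ0 pref R with hC
    set μ'' : α → α := fun j => if j ∈ C then cePoint μ0 pref R j else μ j with hμ''
    set μf := cettcStep μ0 pref (fuel + 1) R μ with hμf
    have hstep : μf = cettcStep μ0 pref fuel (R \ C) μ'' := cettcStep_succ pref fuel R μ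
    have hc' : (R \ C).card ≤ fuel := by
      have h := ceCyc_card_lt hμ0 hpref hR (R := R); rw [← hC] at h; omega
    have honC : ∀ x ∈ C, μ' x = μf x := by
      intro x hx
      have hxR : x ∈ R := ceCyc_subset hx
      have hval : μf x = cePoint μ0 pref R x := cettcStep_on_cyc hμ0 hpref _ _ _ hx
      have hμ'x : μ' x ∈ (R.image μ0).erase x :=
        Finset.mem_erase.mpr ⟨hder x, hmem x hxR⟩
      have hwm := pick_wmax (hpref x) (ceAvail_nonempty hμ0 hxR) hμ'x
      rcases hdom x hxR with h | h
      · exact h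
      · rcases hwm with h2 | h2
        · rw [hval]; exact h2.symm
        · rw [hval] at h
          exact absurd ((hpref x).trans _ _ _ h h2) ((hpref x).irrefl _)
    have honC' : ∀ x ∈ C, μf x = μ0 (ceSig μ0 pref R x) := by
      intro x hx
      rw [hμf, cettcStep_on_cyc hμ0 hpref _ _ _ hx, ceSig, Equiv.apply_symm_apply]
    have hrest : ∀ x ∈ R \ C, μ' x = μf x := by
      rw [hstep]
      refine ih (R \ C) μ'' μ' hc' hinj hder ?_ ?_
      · intro x hx
        have hxR : x ∈ R := (Finset.mem_sdiff.mp hx).1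
        have h1 : μ' x ∈ R.image μ0 := hmem x hxR
        have hunion : C ∪ (R \ C) = R := Finset.union_sdiff_of_subset ceCyc_subset
        rw [← hunion, Finset.image_union, Finset.mem_union] at h1
        rcases h1 with h1 | h1
        · exfalso
          have himgC : C.image μ' = C.image μ0 := by
            have e1 : C.image μf = C.image (fun i => μ0 (ceSig μ0 pref R i)) :=
              Finset.image_congr (fun i hi => honC' i hi)
            have e2 : C.image (fun i => μ0 (ceSig μ0 pref R i)) =
                (C.image (ceSig μ0 pref R)).image μ0 := by rw [Finset.image_image]; rfl
            have e3 : C.image μ' = C.image μf := Finset.image_congr (fun i hi => honC i hi)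
            rw [e3, e1, e2, ceCyc_image hμ0 hpref]
          rw [← himgC] at h1
          obtain ⟨c, hcC, hce⟩ := Finset.mem_image.mp h1
          exact (Finset.mem_sdiff.mp hx).2 ((hinj hce) ▸ hcC)
        · exact h1
      · intro x hx
        rw [← hstep]
        exact hdom x (Finset.mem_sdiff.mp hx).1
    intro x hx
    by_cases h : x ∈ C
    · exact honC x h
    · exact hrest x (Finset.mem_sdiff.mpr ⟨hx, h⟩)

theorem cettcStep_persist (fuel : ℕ) : ∀ (R : Finset α) (μ : α → α) (i j : α),
    R.card ≤ fuel → i ∈ R → j ∈ R → μ0 j ≠ i → ∀ k, (ceSig μ0 pref R)^[k] j = i →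
    cettcStep μ0 pref fuel R μ i = μ0 j ∨
      pref i (cettcStep μ0 pref fuel R μ i) (μ0 j) := by
  induction fuel with
  | zero =>
    intro R μ i j hc hi _ _ _ _
    rw [Finset.card_eq_zero.mp (Nat.le_zero.mp hc)] at hi
    simp at hi
  | succ fuel ih =>
    intro R μ i j hc hi hj hne k hreach
    set S := ceSig μ0 pref R with hS
    by_cases hiC : i ∈ ceCyc μ0 pref R
    · rw [cettcStep_on_cyc hμ0 hpref _ _ _ hiC]
      have hmem : μ0 j ∈ (R.image μ0).erase i :=
        Finset.mem_erase.mpr ⟨hne, Finset.mem_image_of_mem _ hj⟩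
      exact pick_wmax (hpref i) (ceAvail_nonempty hμ0 hi) hmem
    · set C := ceCyc μ0 pref R with hC
      have hnotC : ∀ l, l ≤ k → S^[l] j ∉ C := by
        intro l hl hmemC
        apply hiC
        obtain ⟨hxR, m, hm0, hmR, hfix⟩ := Finset.mem_filter.mp hmemC
        refine Finset.mem_filter.mpr ⟨hi, m, hm0, hmR, ?_⟩
        have : i = S^[k - l] (S^[l] j) := by
          rw [← Function.iterate_add_apply]
          have : k - l + l = k := by omega
          rw [this, hreach]
        rw [this, iter_swap, hfix]
      have hiR' : i ∈ R \ C := by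
        refine Finset.mem_sdiff.mpr ⟨hi, hiC⟩
      have hjR' : j ∈ R \ C := by
        refine Finset.mem_sdiff.mpr ⟨hj, ?_⟩
        have := hnotC 0 (Nat.zero_le k); simpa using this
      have hc' : (R \ C).card ≤ fuel := by
        have h := ceCyc_card_lt hμ0 hpref ⟨i, hi⟩ (R := R); rw [← hC] at h; omega
      have harrow : ∀ l, l ≤ k → (ceSig μ0 pref (R \ C))^[l] j = S^[l] j := by
        intro l hl
        induction l with
        | zero => rfl
        | succ l ihl =>
          have hlk : l ≤ k := by omega
          rw [Function.iterate_succ_apply', ihl hlk, Function.iterate_succ_apply']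
          -- goal : ceSig μ0 pref (R \ C) (S^[l] j) = S (S^[l] j)
          set x := S^[l] j with hx
          have hxR : x ∈ R := ceSig_iter_mem hμ0 hpref hj l
          have hSx : S x ∈ R \ C := by
            refine Finset.mem_sdiff.mpr ⟨?_, ?_⟩
            · exact ceSig_mem hμ0 hpref hxR
            · have := hnotC (l + 1) hl
              rwa [Function.iterate_succ_apply'] at this
          have hpx : cePoint μ0 pref R x = μ0 (S x) := by
            rw [hS, ceSig, Equiv.apply_symm_apply]
          have hsub : ((R \ C).image μ0).erase x ⊆ (R.image μ0).erase x :=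
            Finset.erase_subset_erase _ (Finset.image_subset_image Finset.sdiff_subset)
          have hmem' : cePoint μ0 pref R x ∈ ((R \ C).image μ0).erase x := by
            refine Finset.mem_erase.mpr ⟨?_, ?_⟩
            · exact (Finset.mem_erase.mp (cePoint_mem hμ0 hpref hxR)).1
            · rw [hpx]
              exact Finset.mem_image_of_mem _ hSx
          have : cePoint μ0 pref (R \ C) x = cePoint μ0 pref R x :=
            pick_subset (hpref x) hsub hmem'
          rw [ceSig, this, ← ceSig]
      have hreach' : (ceSig μ0 pref (R \ C))^[k] j = i := by
        rw [harrow k le_rfl, hreach]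
      rw [cettcStep_succ]
      exact ih (R \ C) _ i j hc' hiR' hjR' hne k hreach'

omit hμ0 hpref in
theorem ceSig_congr {pref' : α → α → α → Prop} {i : α}
    (h : ∀ x, x ≠ i → pref' x = pref x) {x : α} (hx : x ≠ i) (R : Finset α) :
    ceSig μ0 pref' R x = ceSig μ0 pref R x := by
  unfold ceSig cePoint; rw [h x hx]

omit hμ0 hpref in
theorem ceCyc_congr_dir {pref' : α → α → α → Prop} {i : α}
    (hpref : StrictProfile pref) (hμ0 : ∀ i, μ0 i ≠ i)
    (h : ∀ x, x ≠ i → pref' x = pref x) (hi : i ∉ ceCyc μ0 pref R) :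
    ceCyc μ0 pref R ⊆ ceCyc μ0 pref' R := by
  intro j hj
  obtain ⟨hjR, m, hm0, hmR, hfix⟩ := Finset.mem_filter.mp hj
  set S := ceSig μ0 pref R with hS
  have hne : ∀ l, l < m → S^[l] j ≠ i := by
    intro l hl heq
    apply hi
    refine Finset.mem_filter.mpr ⟨heq ▸ ceSig_iter_mem hμ0 hpref hjR l, m, hm0, hmR, ?_⟩
    rw [← heq, iter_swap, hfix]
  have hiter : ∀ l, l ≤ m → (ceSig μ0 pref' R)^[l] j = S^[l] j := by
    intro l hl
    induction l with
    | zero => rfl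
    | succ l ihl =>
      rw [Function.iterate_succ_apply', ihl (by omega), Function.iterate_succ_apply']
      exact ceSig_congr h (hne l (by omega)) R
  exact Finset.mem_filter.mpr ⟨hjR, m, hm0, hmR, by rw [hiter m le_rfl]; exact hfix⟩

theorem cettcStep_sp {q : α → α → Prop} (hq : IsStrictTotalOrder α q) (i : α) (fuel : ℕ) :
    ∀ (R : Finset α) (μ μ'' : α → α), R.card ≤ fuel → i ∈ R →
    cettcStep μ0 pref fuel R μ i = cettcStep μ0 (Function.update pref i q) fuel R μ'' i ∨
    pref i (cettcStep μ0 pref fuel R μ i)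
      (cettcStep μ0 (Function.update pref i q) fuel R μ'' i) := by
  have hpq : StrictProfile (Function.update pref i q) := by
    intro x
    by_cases hx : x = i
    · subst hx; rw [Function.update_self]; exact hq
    · rw [Function.update_of_ne hx]; exact hpref x
  have hupd : ∀ x, x ≠ i → Function.update pref i q x = pref x :=
    fun x hx => Function.update_of_ne hx q pref
  set pref' := Function.update pref i q with hpref'def
  induction fuel with
  | zero =>
    intro R μ μ'' hc hi
    rw [Finset.card_eq_zero.mp (Nat.le_zero.mp hc)] at hi
    simp at hi
  | succ fuel ih =>
    intro R μ μ'' hc hi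
    by_cases hiC : i ∈ ceCyc μ0 pref R
    · rw [cettcStep_on_cyc hμ0 hpref _ _ _ hiC]
      have hmem : cettcStep μ0 pref' (fuel + 1) R μ'' i ∈ (R.image μ0).erase i :=
        cettcStep_mem hμ0 hpq (fuel + 1) R μ'' i hi hc
      exact pick_wmax (hpref i) (ceAvail_nonempty hμ0 hi) hmem
    · by_cases hiC' : i ∈ ceCyc μ0 pref' R
      · rw [cettcStep_on_cyc hμ0 hpq _ _ _ hiC']
        obtain ⟨hiR, m, hm0, hmR, hfix⟩ := Finset.mem_filter.mp hiC'
        set S' := ceSig μ0 pref' R with hS'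
        have hex : ∃ n, 0 < n ∧ S'^[n] i = i := ⟨m, hm0, hfix⟩
        set m₀ := Nat.find hex with hm₀
        obtain ⟨hm₀0, hm₀fix⟩ := Nat.find_spec hex
        have hmin : ∀ l, 0 < l → l < m₀ → S'^[l] i ≠ i := by
          intro l hl0 hlm heq
          exact Nat.find_min hex hlm ⟨hl0, heq⟩
        set j₀ := S' i with hj₀
        have hchain : ∀ l, l ≤ m₀ - 1 → (ceSig μ0 pref R)^[l] j₀ = S'^[l + 1] i := by
          intro l hl
          induction l with
          | zero => simp [hj₀]
          | succ l ihl =>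
            rw [Function.iterate_succ_apply', ihl (by omega)]
            have hne : S'^[l + 1] i ≠ i := hmin (l + 1) (by omega) (by omega)
            rw [← ceSig_congr hupd hne R, ← hS']
            exact (Function.iterate_succ_apply' S' (l + 1) i).symm
        have hreach : (ceSig μ0 pref R)^[m₀ - 1] j₀ = i := by
          rw [hchain (m₀ - 1) le_rfl]
          have h : m₀ - 1 + 1 = m₀ := by omega
          rw [h, hm₀fix]
        have hj₀R : j₀ ∈ R := ceSig_mem hμ0 hpq hi
        have hpt : μ0 j₀ = cePoint μ0 pref' R i := by
          rw [hj₀, hS', ceSig, Equiv.apply_symm_apply]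
        have hne0 : μ0 j₀ ≠ i := by
          rw [hpt]; exact (Finset.mem_erase.mp (cePoint_mem hμ0 hpq hi)).1
        have hper := cettcStep_persist hμ0 hpref (fuel + 1) R μ i j₀ hc hi hj₀R hne0
          (m₀ - 1) hreach
        rw [hpt] at hper
        exact hper
      · have hCeq : ceCyc μ0 pref R = ceCyc μ0 pref' R :=
          subset_antisymm (ceCyc_congr_dir hpref hμ0 hupd hiC)
            (ceCyc_congr_dir hpq hμ0 (fun x hx => (hupd x hx).symm) hiC')
        rw [cettcStep_succ, cettcStep_succ (pref := pref'), ← hCeq]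
        apply ih
        · have h := ceCyc_card_lt hμ0 hpref ⟨i, hi⟩ (R := R); omega
        · exact Finset.mem_sdiff.mpr ⟨hi, hiC⟩

end CETTC


/-- For every finite set of at least two divisions and every exogenous derangement
`μ0`, the CE-TTC mechanism satisfies complete exchange (its output is always a
derangement), strategy-proofness, and CE-efficiency. -/
theorem cettc_ce_sp_cee {α : Type*} [Fintype α] [DecidableEq α] [Nonempty α]
    (hcard : 2 ≤ Fintype.card α)
    (μ0 : Equiv.Perm α) (hμ0 : ∀ i, μ0 i ≠ i) :
    (∀ pref : α → α → α → Prop, StrictProfile pref →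
      Function.Bijective (cettc μ0 pref) ∧ ∀ i, cettc μ0 pref i ≠ i) ∧
    (∀ pref : α → α → α → Prop, StrictProfile pref →
      ∀ (i : α) (q : α → α → Prop), IsStrictTotalOrder α q →
        cettc μ0 pref i = cettc μ0 (Function.update pref i q) i ∨
        pref i (cettc μ0 pref i) (cettc μ0 (Function.update pref i q) i)) ∧
    (∀ pref : α → α → α → Prop, StrictProfile pref →
      CEEfficientAt pref (cettc μ0 pref)) := by
  have hcu : (Finset.univ : Finset α).card ≤ Fintype.card α := by
    rw [Finset.card_univ]
  have huniv : (Finset.univ.image (⇑μ0) : Finset α) = Finset.univ := by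
    apply Finset.eq_univ_of_forall
    intro x
    exact Finset.mem_image.mpr ⟨μ0.symm x, Finset.mem_univ _, μ0.apply_symm_apply x⟩
  refine ⟨?_, ?_, ?_⟩
  · intro pref hpref
    obtain ⟨hinj, himg⟩ := cettcStep_bij hμ0 hpref (Fintype.card α) Finset.univ
      (fun a => a) hcu
    constructor
    · have hinj' : Function.Injective (cettc μ0 pref) := fun a b hab =>
        hinj a (Finset.mem_univ a) b (Finset.mem_univ b) hab
      exact Finite.injective_iff_bijective.mp hinj'
    · intro i
      have h := cettcStep_mem hμ0 hpref (Fintype.card α) Finset.univ (fun a => a) i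
        (Finset.mem_univ i) hcu
      exact (Finset.mem_erase.mp h).1
  · intro pref hpref i q hq
    exact cettcStep_sp hμ0 hpref hq i (Fintype.card α) Finset.univ _ _ hcu
      (Finset.mem_univ i)
  · intro pref hpref
    rintro ⟨μ', hbij, hder, hdom, j, hj⟩
    have heq := cettcStep_eff hμ0 hpref (Fintype.card α) Finset.univ (fun a => a) μ' hcu
      hbij.injective hder (fun x _ => by rw [huniv]; exact Finset.mem_univ _)
      (fun x _ => hdom x) j (Finset.mem_univ j)
    have hj' : pref j (cettc μ0 pref j) (cettc μ0 pref j) := by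
      have : μ' j = cettc μ0 pref j := heq
      rwa [this] at hj
    exact (hpref j).irrefl _ hj'
end

section
/- For n = 3 (N = {1,2,3}) and every derangement μ⁰ of N, the CE-TTC mechanism fails to respect improvement: there exist a profile ≻, a division i, and an improvement ≻' for i with respect to ≻ such that f_i(≻) ≻_i f_i(≻'). -/
open scoped Classical

/-! ### Auxiliary machinery -/

lemma pick_eq {α : Type*} [Nonempty α] {r : α → α → Prop} (hr : ∀ a b, r a b → ¬ r b a)
    {s : Finset α} {m : α} (h : m ∈ s ∧ ∀ x ∈ s, x ≠ m → r m x) : pick r s = m := by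
  have hs : (pick r s) ∈ s ∧ ∀ x ∈ s, x ≠ pick r s → r (pick r s) x :=
    Classical.epsilon_spec (p := fun m => m ∈ s ∧ ∀ x ∈ s, x ≠ m → r m x) ⟨m, h⟩
  by_contra hne
  exact hr _ _ (hs.2 m h.1 (Ne.symm hne)) (h.2 _ hs.1 hne)

lemma stepSucc {α : Type*} [Fintype α] [DecidableEq α] [Nonempty α]
    (μ0 : Equiv.Perm α) (pref : α → α → α → Prop) (fuel : ℕ) (R : Finset α) (μ : α → α) :
    cettcStep μ0 pref (fuel+1) R μ =
      cettcStep μ0 pref fuel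
        (R \ R.filter fun i => ∃ m, 0 < m ∧ m ≤ R.card ∧
            (fun j => μ0.symm (pick (pref j) ((R.image ⇑μ0).erase j)))^[m] i = i)
        (fun i =>
          if i ∈ R.filter fun i => ∃ m, 0 < m ∧ m ≤ R.card ∧
              (fun j => μ0.symm (pick (pref j) ((R.image ⇑μ0).erase j)))^[m] i = i
          then pick (pref i) ((R.image ⇑μ0).erase i) else μ i) := rfl

lemma step3 {α : Type*} [Fintype α] [DecidableEq α] [Nonempty α]
    (μ0 : Equiv.Perm α) (pref : α → α → α → Prop) (R : Finset α) (μ : α → α) :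
    cettcStep μ0 pref 3 R μ =
      cettcStep μ0 pref 2
        (R \ R.filter fun i => ∃ m, 0 < m ∧ m ≤ R.card ∧
            (fun j => μ0.symm (pick (pref j) ((R.image ⇑μ0).erase j)))^[m] i = i)
        (fun i =>
          if i ∈ R.filter fun i => ∃ m, 0 < m ∧ m ≤ R.card ∧
              (fun j => μ0.symm (pick (pref j) ((R.image ⇑μ0).erase j)))^[m] i = i
          then pick (pref i) ((R.image ⇑μ0).erase i) else μ i) := stepSucc μ0 pref 2 R μ

lemma step2 {α : Type*} [Fintype α] [DecidableEq α] [Nonempty α]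
    (μ0 : Equiv.Perm α) (pref : α → α → α → Prop) (R : Finset α) (μ : α → α) :
    cettcStep μ0 pref 2 R μ =
      cettcStep μ0 pref 1
        (R \ R.filter fun i => ∃ m, 0 < m ∧ m ≤ R.card ∧
            (fun j => μ0.symm (pick (pref j) ((R.image ⇑μ0).erase j)))^[m] i = i)
        (fun i =>
          if i ∈ R.filter fun i => ∃ m, 0 < m ∧ m ≤ R.card ∧
              (fun j => μ0.symm (pick (pref j) ((R.image ⇑μ0).erase j)))^[m] i = i
          then pick (pref i) ((R.image ⇑μ0).erase i) else μ i) := stepSucc μ0 pref 1 R μ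

lemma step1 {α : Type*} [Fintype α] [DecidableEq α] [Nonempty α]
    (μ0 : Equiv.Perm α) (pref : α → α → α → Prop) (R : Finset α) (μ : α → α) :
    cettcStep μ0 pref 1 R μ =
      cettcStep μ0 pref 0
        (R \ R.filter fun i => ∃ m, 0 < m ∧ m ≤ R.card ∧
            (fun j => μ0.symm (pick (pref j) ((R.image ⇑μ0).erase j)))^[m] i = i)
        (fun i =>
          if i ∈ R.filter fun i => ∃ m, 0 < m ∧ m ≤ R.card ∧
              (fun j => μ0.symm (pick (pref j) ((R.image ⇑μ0).erase j)))^[m] i = i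
          then pick (pref i) ((R.image ⇑μ0).erase i) else μ i) := stepSucc μ0 pref 0 R μ

lemma stepEmpty {α : Type*} [Fintype α] [DecidableEq α] [Nonempty α]
    (μ0 : Equiv.Perm α) (pref : α → α → α → Prop) (fuel : ℕ) (μ : α → α) :
    cettcStep μ0 pref fuel ∅ μ = μ := by
  induction fuel generalizing μ with
  | zero => rfl
  | succ n ih =>
    rw [stepSucc, Finset.filter_empty]
    have h2 : (fun i => if i ∈ (∅ : Finset α) then
        pick (pref i) (((∅:Finset α).image ⇑μ0).erase i) else μ i) = μ :=
      funext fun i => if_neg (Finset.notMem_empty i)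
    rw [Finset.sdiff_empty, h2]
    exact ih μ

/-! ### The concrete preference profiles -/

def rkA : Fin 3 → Fin 3 → ℕ := ![![0,2,1],![0,1,2],![1,0,2]]
def prefA (i a b : Fin 3) : Prop := rkA i a < rkA i b
instance (i a b : Fin 3) : Decidable (prefA i a b) := inferInstanceAs (Decidable (_ < _))
def rkB : Fin 3 → Fin 3 → ℕ := ![![0,1,2],![0,1,2],![1,0,2]]
def prefB (i a b : Fin 3) : Prop := rkB i a < rkB i b
instance (i a b : Fin 3) : Decidable (prefB i a b) := inferInstanceAs (Decidable (_ < _))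
def rkC : Fin 3 → Fin 3 → ℕ := ![![0,1,2],![2,0,1],![0,1,2]]
def prefC (i a b : Fin 3) : Prop := rkC i a < rkC i b
instance (i a b : Fin 3) : Decidable (prefC i a b) := inferInstanceAs (Decidable (_ < _))
def rkD : Fin 3 → Fin 3 → ℕ := ![![0,1,2],![0,1,2],![0,1,2]]
def prefD (i a b : Fin 3) : Prop := rkD i a < rkD i b
instance (i a b : Fin 3) : Decidable (prefD i a b) := inferInstanceAs (Decidable (_ < _))

lemma asymA : ∀ a b : Fin 3, ∀ i, prefA i a b → ¬ prefA i b a := by decide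
lemma asymB : ∀ a b : Fin 3, ∀ i, prefB i a b → ¬ prefB i b a := by decide
lemma asymC : ∀ a b : Fin 3, ∀ i, prefC i a b → ¬ prefC i b a := by decide
lemma asymD : ∀ a b : Fin 3, ∀ i, prefD i a b → ¬ prefD i b a := by decide

lemma strict_of {p : Fin 3 → Fin 3 → Fin 3 → Prop}
    (h1 : ∀ i a b, p i a b ∨ a = b ∨ p i b a) (h2 : ∀ i a, ¬ p i a a)
    (h3 : ∀ i a b c, p i a b → p i b c → p i a c) : StrictProfile p :=
  fun i => { trichotomous := fun a b hab hba => ((h1 i a b).resolve_left hab).resolve_right hba, irrefl := h2 i, trans := h3 i }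

lemma strictA : StrictProfile prefA := strict_of (by decide) (by decide) (by decide)
lemma strictB : StrictProfile prefB := strict_of (by decide) (by decide) (by decide)
lemma strictC : StrictProfile prefC := strict_of (by decide) (by decide) (by decide)
lemma strictD : StrictProfile prefD := strict_of (by decide) (by decide) (by decide)

lemma improvAB : Improvement prefA prefB 1 := by
  have e : ∀ a b : Fin 3, prefB 1 a b ↔ prefA 1 a b := by decide
  exact ⟨funext fun a => funext fun b => propext (e a b), by decide, by decide⟩

lemma improvCD : Improvement prefC prefD 0 := by
  have e : ∀ a b : Fin 3, prefD 0 a b ↔ prefC 0 a b := by decide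
  exact ⟨funext fun a => funext fun b => propext (e a b), by decide, by decide⟩

/-! ### Run computations, case `μ0 = (0 1 2)` -/

section CaseA
variable (μ0 : Equiv.Perm (Fin 3)) (h0 : μ0 0 = 1) (h1 : μ0 1 = 2) (h2 : μ0 2 = 0)
  (s0 : μ0.symm 0 = 2) (s1 : μ0.symm 1 = 0) (s2 : μ0.symm 2 = 1)
  (himg : Finset.univ.image ⇑μ0 = (Finset.univ : Finset (Fin 3)))

include s0 s1 s2 himg in
lemma runA : cettc μ0 prefA 1 = 0 := by
  unfold cettc
  rw [Fintype.card_fin, step3]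
  simp only [himg]
  have hp : ∀ i : Fin 3, pick (prefA i) (Finset.univ.erase i) = ![2,0,1] i := by
    intro i
    fin_cases i
    · exact pick_eq (fun a b => asymA a b _) (by decide)
    · exact pick_eq (fun a b => asymA a b _) (by decide)
    · exact pick_eq (fun a b => asymA a b _) (by decide)
  simp only [hp]
  have hs : ∀ j : Fin 3, μ0.symm (![2,0,1] j) = ![1,2,0] j := by
    intro j
    fin_cases j
    · exact s2
    · exact s0
    · exact s1
  simp only [hs]
  have hC : (Finset.univ.filter fun i : Fin 3 => ∃ m, 0 < m ∧
      m ≤ (Finset.univ : Finset (Fin 3)).card ∧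
      (fun j => (![1,2,0] : Fin 3 → Fin 3) j)^[m] i = i) = Finset.univ := by
    refine Finset.eq_univ_iff_forall.2 fun x => Finset.mem_filter.2 ⟨Finset.mem_univ _, ?_⟩
    fin_cases x
    · exact ⟨3, by decide⟩
    · exact ⟨3, by decide⟩
    · exact ⟨3, by decide⟩
  rw [hC, Finset.sdiff_self, stepEmpty]
  simp

include h1 h2 s0 s1 s2 himg in
lemma runB : cettc μ0 prefB 1 = 2 := by
  unfold cettc
  rw [Fintype.card_fin, step3]
  simp only [himg]
  have hp : ∀ i : Fin 3, pick (prefB i) (Finset.univ.erase i) = ![1,0,1] i := by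
    intro i
    fin_cases i
    · exact pick_eq (fun a b => asymB a b _) (by decide)
    · exact pick_eq (fun a b => asymB a b _) (by decide)
    · exact pick_eq (fun a b => asymB a b _) (by decide)
  simp only [hp]
  have hs : ∀ j : Fin 3, μ0.symm (![1,0,1] j) = ![0,2,0] j := by
    intro j
    fin_cases j
    · exact s1
    · exact s0
    · exact s1
  simp only [hs]
  have hC : (Finset.univ.filter fun i : Fin 3 => ∃ m, 0 < m ∧
      m ≤ (Finset.univ : Finset (Fin 3)).card ∧
      (fun j => (![0,2,0] : Fin 3 → Fin 3) j)^[m] i = i) = {0} := by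
    ext x
    simp only [Finset.mem_filter, Finset.mem_univ, true_and]
    have hcard : (Finset.univ : Finset (Fin 3)).card = 3 := by decide
    fin_cases x
    · exact iff_of_true ⟨1, by decide⟩ (by decide)
    · refine iff_of_false ?_ (by decide)
      rintro ⟨m, hm, hmc, hit⟩
      rw [hcard] at hmc
      interval_cases m
      · exact absurd hit (by decide)
      · exact absurd hit (by decide)
      · exact absurd hit (by decide)
    · refine iff_of_false ?_ (by decide)
      rintro ⟨m, hm, hmc, hit⟩
      rw [hcard] at hmc
      interval_cases m
      · exact absurd hit (by decide)
      · exact absurd hit (by decide)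
      · exact absurd hit (by decide)
  rw [hC, show Finset.univ \ ({0} : Finset (Fin 3)) = {1,2} from by decide]
  -- round 2
  rw [step2]
  have himg2 : ({1,2} : Finset (Fin 3)).image ⇑μ0 = {2,0} := by
    rw [Finset.image_insert, Finset.image_singleton, h1, h2]
  simp only [himg2]
  have hp2 : ∀ i : Fin 3, pick (prefB i) (({2,0} : Finset (Fin 3)).erase i) = ![2,0,0] i := by
    intro i
    fin_cases i
    · exact pick_eq (fun a b => asymB a b _) (by decide)
    · exact pick_eq (fun a b => asymB a b _) (by decide)
    · exact pick_eq (fun a b => asymB a b _) (by decide)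
  simp only [hp2]
  have hs2 : ∀ j : Fin 3, μ0.symm (![2,0,0] j) = ![1,2,2] j := by
    intro j
    fin_cases j
    · exact s2
    · exact s0
    · exact s0
  simp only [hs2]
  have hC2 : (({1,2} : Finset (Fin 3)).filter fun i : Fin 3 => ∃ m, 0 < m ∧
      m ≤ ({1,2} : Finset (Fin 3)).card ∧
      (fun j => (![1,2,2] : Fin 3 → Fin 3) j)^[m] i = i) = {2} := by
    ext x
    simp only [Finset.mem_filter]
    have hcard : ({1,2} : Finset (Fin 3)).card = 2 := by decide
    fin_cases x
    · exact iff_of_false (fun h => absurd h.1 (by decide)) (by decide)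
    · refine iff_of_false ?_ (by decide)
      rintro ⟨-, m, hm, hmc, hit⟩
      rw [hcard] at hmc
      interval_cases m
      · exact absurd hit (by decide)
      · exact absurd hit (by decide)
    · exact iff_of_true ⟨by decide, 1, by decide⟩ (by decide)
  rw [hC2, show ({1,2} : Finset (Fin 3)) \ {2} = {1} from by decide]
  -- round 3
  rw [step1]
  have himg3 : ({1} : Finset (Fin 3)).image ⇑μ0 = {2} := by
    rw [Finset.image_singleton, h1]
  simp only [himg3]
  have q1 : pick (prefB 1) (({2} : Finset (Fin 3)).erase 1) = 2 :=
    pick_eq (fun a b => asymB a b _) (by decide)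
  have hC3 : (({1} : Finset (Fin 3)).filter fun i : Fin 3 => ∃ m, 0 < m ∧
      m ≤ ({1} : Finset (Fin 3)).card ∧
      (fun j => μ0.symm (pick (prefB j) (({2} : Finset (Fin 3)).erase j)))^[m] i = i) = {1} := by
    refine Finset.filter_true_of_mem fun x hx => ?_
    rw [Finset.mem_singleton] at hx
    subst hx
    refine ⟨1, Nat.one_pos, by decide, ?_⟩
    rw [Function.iterate_one]
    show μ0.symm (pick (prefB 1) (({2} : Finset (Fin 3)).erase 1)) = 1
    rw [q1, s2]
  rw [hC3, Finset.sdiff_self, stepEmpty]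
  show (if (1:Fin 3) ∈ ({1} : Finset (Fin 3)) then
      pick (prefB 1) (({2} : Finset (Fin 3)).erase 1) else _) = 2
  rw [if_pos (Finset.mem_singleton_self 1), q1]

end CaseA

/-! ### Run computations, case `μ0 = (0 2 1)` -/

section CaseB
variable (μ0 : Equiv.Perm (Fin 3)) (h0 : μ0 0 = 2) (h1 : μ0 1 = 0) (h2 : μ0 2 = 1)
  (s0 : μ0.symm 0 = 1) (s1 : μ0.symm 1 = 2) (s2 : μ0.symm 2 = 0)
  (himg : Finset.univ.image ⇑μ0 = (Finset.univ : Finset (Fin 3)))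

include s0 s1 s2 himg in
lemma runC : cettc μ0 prefC 0 = 1 := by
  unfold cettc
  rw [Fintype.card_fin, step3]
  simp only [himg]
  have hp : ∀ i : Fin 3, pick (prefC i) (Finset.univ.erase i) = ![1,2,0] i := by
    intro i
    fin_cases i
    · exact pick_eq (fun a b => asymC a b _) (by decide)
    · exact pick_eq (fun a b => asymC a b _) (by decide)
    · exact pick_eq (fun a b => asymC a b _) (by decide)
  simp only [hp]
  have hs : ∀ j : Fin 3, μ0.symm (![1,2,0] j) = ![2,0,1] j := by
    intro j
    fin_cases j
    · exact s1
    · exact s2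
    · exact s0
  simp only [hs]
  have hC : (Finset.univ.filter fun i : Fin 3 => ∃ m, 0 < m ∧
      m ≤ (Finset.univ : Finset (Fin 3)).card ∧
      (fun j => (![2,0,1] : Fin 3 → Fin 3) j)^[m] i = i) = Finset.univ := by
    refine Finset.eq_univ_iff_forall.2 fun x => Finset.mem_filter.2 ⟨Finset.mem_univ _, ?_⟩
    fin_cases x
    · exact ⟨3, by decide⟩
    · exact ⟨3, by decide⟩
    · exact ⟨3, by decide⟩
  rw [hC, Finset.sdiff_self, stepEmpty]
  simp

include h0 h2 s0 s1 s2 himg in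
lemma runD : cettc μ0 prefD 0 = 2 := by
  unfold cettc
  rw [Fintype.card_fin, step3]
  simp only [himg]
  have hp : ∀ i : Fin 3, pick (prefD i) (Finset.univ.erase i) = ![1,0,0] i := by
    intro i
    fin_cases i
    · exact pick_eq (fun a b => asymD a b _) (by decide)
    · exact pick_eq (fun a b => asymD a b _) (by decide)
    · exact pick_eq (fun a b => asymD a b _) (by decide)
  simp only [hp]
  have hs : ∀ j : Fin 3, μ0.symm (![1,0,0] j) = ![2,1,1] j := by
    intro j
    fin_cases j
    · exact s1
    · exact s0
    · exact s0
  simp only [hs]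
  have hC : (Finset.univ.filter fun i : Fin 3 => ∃ m, 0 < m ∧
      m ≤ (Finset.univ : Finset (Fin 3)).card ∧
      (fun j => (![2,1,1] : Fin 3 → Fin 3) j)^[m] i = i) = {1} := by
    ext x
    simp only [Finset.mem_filter, Finset.mem_univ, true_and]
    have hcard : (Finset.univ : Finset (Fin 3)).card = 3 := by decide
    fin_cases x
    · refine iff_of_false ?_ (by decide)
      rintro ⟨m, hm, hmc, hit⟩
      rw [hcard] at hmc
      interval_cases m
      · exact absurd hit (by decide)
      · exact absurd hit (by decide)
      · exact absurd hit (by decide)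
    · exact iff_of_true ⟨1, by decide⟩ (by decide)
    · refine iff_of_false ?_ (by decide)
      rintro ⟨m, hm, hmc, hit⟩
      rw [hcard] at hmc
      interval_cases m
      · exact absurd hit (by decide)
      · exact absurd hit (by decide)
      · exact absurd hit (by decide)
  rw [hC, show Finset.univ \ ({1} : Finset (Fin 3)) = {0,2} from by decide]
  -- round 2
  rw [step2]
  have himg2 : ({0,2} : Finset (Fin 3)).image ⇑μ0 = {2,1} := by
    rw [Finset.image_insert, Finset.image_singleton, h0, h2]
  simp only [himg2]
  have hp2 : ∀ i : Fin 3, pick (prefD i) (({2,1} : Finset (Fin 3)).erase i) = ![1,2,1] i := by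
    intro i
    fin_cases i
    · exact pick_eq (fun a b => asymD a b _) (by decide)
    · exact pick_eq (fun a b => asymD a b _) (by decide)
    · exact pick_eq (fun a b => asymD a b _) (by decide)
  simp only [hp2]
  have hs2 : ∀ j : Fin 3, μ0.symm (![1,2,1] j) = ![2,0,2] j := by
    intro j
    fin_cases j
    · exact s1
    · exact s2
    · exact s1
  simp only [hs2]
  have hC2 : (({0,2} : Finset (Fin 3)).filter fun i : Fin 3 => ∃ m, 0 < m ∧
      m ≤ ({0,2} : Finset (Fin 3)).card ∧
      (fun j => (![2,0,2] : Fin 3 → Fin 3) j)^[m] i = i) = {2} := by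
    ext x
    simp only [Finset.mem_filter]
    have hcard : ({0,2} : Finset (Fin 3)).card = 2 := by decide
    fin_cases x
    · refine iff_of_false ?_ (by decide)
      rintro ⟨-, m, hm, hmc, hit⟩
      rw [hcard] at hmc
      interval_cases m
      · exact absurd hit (by decide)
      · exact absurd hit (by decide)
    · exact iff_of_false (fun h => absurd h.1 (by decide)) (by decide)
    · exact iff_of_true ⟨by decide, 1, by decide⟩ (by decide)
  rw [hC2, show ({0,2} : Finset (Fin 3)) \ {2} = {0} from by decide]
  -- round 3
  rw [step1]
  have himg3 : ({0} : Finset (Fin 3)).image ⇑μ0 = {2} := by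
    rw [Finset.image_singleton, h0]
  simp only [himg3]
  have q0 : pick (prefD 0) (({2} : Finset (Fin 3)).erase 0) = 2 :=
    pick_eq (fun a b => asymD a b _) (by decide)
  have hC3 : (({0} : Finset (Fin 3)).filter fun i : Fin 3 => ∃ m, 0 < m ∧
      m ≤ ({0} : Finset (Fin 3)).card ∧
      (fun j => μ0.symm (pick (prefD j) (({2} : Finset (Fin 3)).erase j)))^[m] i = i) = {0} := by
    refine Finset.filter_true_of_mem fun x hx => ?_
    rw [Finset.mem_singleton] at hx
    subst hx
    refine ⟨1, Nat.one_pos, by decide, ?_⟩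
    rw [Function.iterate_one]
    show μ0.symm (pick (prefD 0) (({2} : Finset (Fin 3)).erase 0)) = 0
    rw [q0, s2]
  rw [hC3, Finset.sdiff_self, stepEmpty]
  show (if (0:Fin 3) ∈ ({0} : Finset (Fin 3)) then
      pick (prefD 0) (({2} : Finset (Fin 3)).erase 0) else _) = 2
  rw [if_pos (Finset.mem_singleton_self 0), q0]

end CaseB


/-- For `n = 3` and every exogenous derangement `μ0`, the CE-TTC mechanism fails to
respect improvement: there are a profile `pref`, a division `i` and an improvement
`pref'` for `i` with respect to `pref` such that `i` strictly prefers its CE-TTC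
assignment at `pref` to its CE-TTC assignment at `pref'`. -/
theorem cettc_fails_RI (μ0 : Equiv.Perm (Fin 3)) (hμ0 : ∀ i, μ0 i ≠ i) :
    ∃ (pref pref' : Fin 3 → Fin 3 → Fin 3 → Prop) (i : Fin 3),
      StrictProfile pref ∧ StrictProfile pref' ∧ Improvement pref pref' i ∧
      pref i (cettc μ0 pref i) (cettc μ0 pref' i) := by
  have himg : Finset.univ.image ⇑μ0 = (Finset.univ : Finset (Fin 3)) :=
    Finset.eq_univ_iff_forall.2 fun x =>
      Finset.mem_image.2 ⟨μ0.symm x, Finset.mem_univ _, μ0.apply_symm_apply x⟩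
  have tri1 : ∀ x : Fin 3, x ≠ 0 → x = 1 ∨ x = 2 := by decide
  rcases tri1 _ (hμ0 0) with h0 | h0
  · -- μ0 = (0 1 2)
    have h2 : μ0 2 = 0 := by
      have n1 : μ0 2 ≠ 1 := fun e => absurd (μ0.injective (h0.trans e.symm)) (by decide)
      exact (by decide : ∀ x : Fin 3, x ≠ 2 → x ≠ 1 → x = 0) _ (hμ0 2) n1
    have h1 : μ0 1 = 2 := by
      have n0 : μ0 1 ≠ 0 := fun e => absurd (μ0.injective (e.trans h2.symm)) (by decide)
      exact (by decide : ∀ x : Fin 3, x ≠ 1 → x ≠ 0 → x = 2) _ (hμ0 1) n0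
    have s0 : μ0.symm 0 = 2 := by rw [← h2, Equiv.symm_apply_apply]
    have s1 : μ0.symm 1 = 0 := by rw [← h0, Equiv.symm_apply_apply]
    have s2 : μ0.symm 2 = 1 := by rw [← h1, Equiv.symm_apply_apply]
    refine ⟨prefA, prefB, 1, strictA, strictB, improvAB, ?_⟩
    rw [runA μ0 s0 s1 s2 himg, runB μ0 h1 h2 s0 s1 s2 himg]
    decide
  · -- μ0 = (0 2 1)
    have h1 : μ0 1 = 0 := by
      have n2 : μ0 1 ≠ 2 := fun e => absurd (μ0.injective (e.trans h0.symm)) (by decide)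
      exact (by decide : ∀ x : Fin 3, x ≠ 1 → x ≠ 2 → x = 0) _ (hμ0 1) n2
    have h2 : μ0 2 = 1 := by
      have n0 : μ0 2 ≠ 0 := fun e => absurd (μ0.injective (e.trans h1.symm)) (by decide)
      exact (by decide : ∀ x : Fin 3, x ≠ 2 → x ≠ 0 → x = 1) _ (hμ0 2) n0
    have s0 : μ0.symm 0 = 1 := by rw [← h1, Equiv.symm_apply_apply]
    have s1 : μ0.symm 1 = 2 := by rw [← h2, Equiv.symm_apply_apply]
    have s2 : μ0.symm 2 = 0 := by rw [← h0, Equiv.symm_apply_apply]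
    refine ⟨prefC, prefD, 0, strictC, strictD, improvCD, ?_⟩
    rw [runC μ0 s0 s1 s2 himg, runD μ0 h0 h2 s0 s1 s2 himg]
    decide
end
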